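/- For natural numbers n and k with 1 ≤ k ≤ n, the number of partial functions t on {1,…,n} satisfying |dom t| − |im t| ≥ k equals ∑_{d=k+1}^{n} ∑_{m=1}^{d−k} C(n,d)·C(n,m)·Surj(d,m), where C(a,b) is the binomial coefficient and Surj(d,m) is the number of surjective (total) functions from a d-element set onto an m-element set. (Equivalently, this is the dimension of the k-th radical power of ℂPT_n, and Surj(d,m) = S(d,m)·m! with S(d,m) the Stirling number of the second kind.) -/
import Mathlib


/-- The monoid of partial functions on `{1,…,n}`, modeled as `Fin n → Option (Fin n)`,
under composition of partial functions (right to left). -/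
abbrev PT (n : ℕ) := Fin n → Option (Fin n)

namespace PT

variable {n : ℕ}

/-- Composition of partial functions, right to left: `comp s t = s ∘ t`. -/
def comp (s t : PT n) : PT n := fun x => (t x).bind s

/-- The domain of a partial function. -/
def dom (t : PT n) : Finset (Fin n) := Finset.univ.filter fun x => (t x).isSome

/-- The image (range) of a partial function. -/
def ran (t : PT n) : Finset (Fin n) := Finset.univ.filter fun y => ∃ x, t x = some y

/-- The identity partial function on the subset `X`. -/
def idOn (X : Finset (Fin n)) : PT n := fun x => if x ∈ X then some x else none

instance : Monoid (PT n) where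
  mul := comp
  one := fun x => some x
  mul_assoc s t w := by
    funext x
    show (w x).bind (fun z => (t z).bind s) = ((w x).bind t).bind s
    exact (Option.bind_assoc (w x) t s).symm
  one_mul t := by
    funext x
    show (t x).bind (fun y => some y) = t x
    cases t x <;> rfl
  mul_one t := by
    funext x
    show (some x).bind t = t x
    rfl

end PT

open PT


lemma mem_dom {n : ℕ} {t : PT n} {x : Fin n} : x ∈ dom t ↔ (t x).isSome := by
  simp [dom]

lemma mem_ran {n : ℕ} {t : PT n} {y : Fin n} : y ∈ ran t ↔ ∃ x, t x = some y := by
  simp [ran]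

noncomputable def domRanEquiv {n : ℕ} (D R : Finset (Fin n)) :
    {t : PT n // dom t = D ∧ ran t = R} ≃ {f : D → R // Function.Surjective f} where
  toFun t := ⟨fun x => ⟨(t.1 x).get (mem_dom.1 (show (x:Fin n) ∈ dom t.1 by rw [t.2.1]; exact x.2)),
      by
        obtain ⟨t, ht1, ht2⟩ := t
        subst ht1; subst ht2
        exact mem_ran.2 ⟨x, by simp⟩⟩,
    by
      obtain ⟨t, ht1, ht2⟩ := t
      subst ht1; subst ht2
      rintro ⟨y, hy⟩
      obtain ⟨x, hx⟩ := mem_ran.1 hy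
      have hxD : x ∈ dom t := mem_dom.2 (by simp [hx])
      exact ⟨⟨x, hxD⟩, by simp [hx]⟩⟩
  invFun f := ⟨fun x => if h : x ∈ D then some (f.1 ⟨x, h⟩) else none, by
    constructor
    · ext x; simp [mem_dom]
    · ext y
      simp only [mem_ran]
      constructor
      · rintro ⟨x, hx⟩
        by_cases h : x ∈ D
        · rw [dif_pos h, Option.some_inj] at hx
          exact hx ▸ (f.1 ⟨x, h⟩).2
        · rw [dif_neg h] at hx; exact absurd hx (by simp)
      · intro hy
        obtain ⟨x, hx⟩ := f.2 ⟨y, hy⟩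
        exact ⟨x, by simp [x.2, hx]⟩⟩
  left_inv t := by
    obtain ⟨t, ht1, ht2⟩ := t
    subst ht1; subst ht2
    ext x : 2
    dsimp only
    by_cases h : x ∈ dom t
    · rw [dif_pos h]
      exact Option.some_get _
    · rw [dif_neg h]
      rw [mem_dom] at h
      exact (Option.not_isSome_iff_eq_none.1 h).symm
  right_inv f := by
    ext x : 2
    simp

lemma surj_card_congr {α β α' β' : Type*} (e1 : α ≃ α') (e2 : β ≃ β') :
    Nat.card {f : α → β // Function.Surjective f} =
      Nat.card {f : α' → β' // Function.Surjective f} := by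
  apply Nat.card_congr
  refine Equiv.subtypeEquiv (e1.arrowCongr e2) ?_
  intro f
  simp [Equiv.arrowCongr]

lemma surj_zero (d : ℕ) (hd : 1 ≤ d) :
    Nat.card {f : Fin d → Fin 0 // Function.Surjective f} = 0 := by
  have : IsEmpty {f : Fin d → Fin 0 // Function.Surjective f} := by
    constructor; rintro ⟨f, -⟩; exact (f ⟨0, hd⟩).elim0
  simp [Nat.card_of_isEmpty]

lemma sum_finset_card {N : ℕ} (g : ℕ → ℕ) :
    ∑ R : Finset (Fin N), g R.card = ∑ m ∈ Finset.range (N+1), N.choose m * g m := by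
  have h := Finset.sum_fiberwise_of_maps_to (s := (Finset.univ : Finset (Finset (Fin N))))
      (t := Finset.range (N+1)) (g := Finset.card)
      (fun R _ => Finset.mem_range.2 (Nat.lt_succ_of_le ((Finset.card_le_univ R).trans (by simp))))
      (fun R => g R.card)
  rw [← h]
  refine Finset.sum_congr rfl fun m _ => ?_
  have hfib : Finset.univ.filter (fun R : Finset (Fin N) => R.card = m)
      = Finset.powersetCard m Finset.univ := by
    rw [Finset.powersetCard_eq_filter, Finset.powerset_univ]
  rw [hfib, Finset.sum_congr rfl (fun R hR => by rw [(Finset.mem_powersetCard.1 hR).2]),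
    Finset.sum_const, Finset.card_powersetCard, smul_eq_mul, Finset.card_univ, Fintype.card_fin]

lemma N_eq {n : ℕ} (D R : Finset (Fin n)) :
    (Finset.univ.filter fun t : PT n => dom t = D ∧ ran t = R).card
      = Nat.card {f : Fin D.card → Fin R.card // Function.Surjective f} := by
  rw [← Fintype.card_subtype, ← Nat.card_eq_fintype_card, Nat.card_congr (domRanEquiv D R)]
  exact surj_card_congr (Fintype.equivFinOfCardEq (Fintype.card_coe D))
    (Fintype.equivFinOfCardEq (Fintype.card_coe R))


open PT in
/-- For `1 ≤ k ≤ n`, the number of partial functions `t` on `{1,…,n}` with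
`|dom t| − |im t| ≥ k` equals `∑_{d=k+1}^{n} ∑_{m=1}^{d−k} C(n,d)·C(n,m)·Surj(d,m)`, where
`Surj(d,m)` is the number of surjections from a `d`-element set onto an `m`-element set.
(This is the dimension of the `k`-th radical power of `ℂPT_n`.) -/
theorem card_partial_functions_deficiency_ge (n k : ℕ) (hk : 1 ≤ k) (hkn : k ≤ n) :
    Nat.card {t : PT n // (ran t).card + k ≤ (dom t).card} =
      ∑ d ∈ Finset.Icc (k + 1) n, ∑ m ∈ Finset.Icc 1 (d - k),
        n.choose d * n.choose m * Nat.card {f : Fin d → Fin m // Function.Surjective f} := by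
  classical
  rw [Nat.card_eq_fintype_card, Fintype.card_subtype]
  rw [Finset.card_eq_sum_card_fiberwise
    (f := fun t : PT n => (dom t, ran t)) (t := Finset.univ) (fun t _ => Finset.mem_univ _)]
  have step1 : ∀ p : Finset (Fin n) × Finset (Fin n),
      ((Finset.univ.filter fun t : PT n => (ran t).card + k ≤ (dom t).card).filter
        fun t => (dom t, ran t) = p).card
      = if p.2.card + k ≤ p.1.card
          then Nat.card {f : Fin p.1.card → Fin p.2.card // Function.Surjective f} else 0 := by
    intro p
    rw [Finset.filter_filter]
    split_ifs with h
    · rw [← N_eq]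
      congr 1
      apply Finset.filter_congr
      intro t _
      rw [Prod.ext_iff]
      show _ ↔ _
      constructor
      · rintro ⟨-, h1, h2⟩; exact ⟨h1, h2⟩
      · rintro ⟨h1, h2⟩; exact ⟨by rw [h1, h2]; exact h, h1, h2⟩
    · convert Finset.card_empty
      rw [Finset.filter_eq_empty_iff]
      rintro t - ⟨h1, h2⟩
      rw [Prod.mk.injEq] at h2
      exact h (h2.1 ▸ h2.2 ▸ h1)
  rw [Finset.sum_congr rfl fun p _ => step1 p]
  rw [Fintype.sum_prod_type]
  -- inner sum over R
  have step2 : ∀ D : Finset (Fin n),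
      (∑ R : Finset (Fin n), if R.card + k ≤ D.card
          then Nat.card {f : Fin D.card → Fin R.card // Function.Surjective f} else 0)
      = ∑ m ∈ Finset.range (n+1), n.choose m *
          (if m + k ≤ D.card
            then Nat.card {f : Fin D.card → Fin m // Function.Surjective f} else 0) := by
    intro D
    exact sum_finset_card fun m => if m + k ≤ D.card
        then Nat.card {f : Fin D.card → Fin m // Function.Surjective f} else 0
  rw [Finset.sum_congr rfl fun D _ => step2 D]
  have step3 := sum_finset_card (N := n) fun d => ∑ m ∈ Finset.range (n+1), n.choose m *
      (if m + k ≤ d then Nat.card {f : Fin d → Fin m // Function.Surjective f} else 0)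
  rw [step3]
  -- now pure arithmetic over ranges
  rw [show Finset.range (n+1) = Finset.Icc 0 n by rw [Finset.range_eq_Ico, Finset.Ico_add_one_right_eq_Icc]]
  rw [← Finset.sum_subset (Finset.Icc_subset_Icc_left (by omega) :
        Finset.Icc (k+1) n ⊆ Finset.Icc 0 n) ?side]
  · refine Finset.sum_congr rfl fun d hd => ?_
    obtain ⟨hd1, hd2⟩ := Finset.mem_Icc.1 hd
    rw [Finset.mul_sum]
    rw [← Finset.sum_subset (show Finset.Icc 1 (d-k) ⊆ Finset.Icc 0 n from
        Finset.Icc_subset_Icc (by omega) (by omega)) ?side2]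
    · refine Finset.sum_congr rfl fun m hm => ?_
      obtain ⟨hm1, hm2⟩ := Finset.mem_Icc.1 hm
      rw [if_pos (by omega), mul_assoc]
    · intro m hm hm'
      simp only [Finset.mem_Icc] at hm hm'
      rcases Nat.eq_zero_or_pos m with rfl | hm0
      · rcases le_or_gt k d with h | h
        · rw [if_pos (by omega), surj_zero d (by omega)]; simp
        · rw [if_neg (by omega)]; simp
      · rw [if_neg (by omega)]; simp
  · intro d hd hd'
    simp only [Finset.mem_Icc] at hd hd'
    have hdk : d ≤ k := by omega
    have : ∀ m ∈ Finset.Icc 0 n, n.choose m *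
        (if m + k ≤ d then Nat.card {f : Fin d → Fin m // Function.Surjective f} else 0) = 0 := by
      intro m hm
      rcases Nat.eq_zero_or_pos m with rfl | hm0
      · rcases le_or_gt k d with h | h
        · rw [if_pos (by omega), surj_zero d (by omega)]; simp
        · rw [if_neg (by omega)]; simp
      · rw [if_neg (by omega)]; simp
    rw [Finset.sum_congr rfl this]
    simp
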